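/- Let V and V' be finite types, let F be a nonempty superset-closed family of finsets of V such that every subset of V of cardinality |V| − 1 belongs to F, and let F' be a nonempty superset-closed family of finsets of V' such that every subset of V' of cardinality |V'| − 1 belongs to F'. Suppose φ is a graph isomorphism from the TAR graph of F to the TAR graph of F'. Then |V| = |V'|, the finset R' = Finset.univ \ φ(Finset.univ) (complement in V' of the image of the full vertex set of V) is disjoint from every minimal member of F', and the map S ↦ φ(S) △ R' is a graph isomorphism from the TAR graph of F to the TAR graph of F' satisfying |φ(S) △ R'| = |S| for every S ∈ F. -/

import Mathlib

variable {V : Type*} [Fintype V] [DecidableEq V]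

/-- A family of finsets is superset-closed if it is closed under taking supersets. -/
def SupersetClosed (F : Finset (Finset V)) : Prop :=
  ∀ ⦃S T : Finset V⦄, S ∈ F → S ⊆ T → T ∈ F

/-- A minimal member of a family: a member no proper subset of which is a member. -/
def IsMinimalMem (F : Finset (Finset V)) (M : Finset V) : Prop :=
  M ∈ F ∧ ∀ M' : Finset V, M' ⊂ M → M' ∉ F

/-- The TAR graph of a family of finsets: vertices are the members of the family,
two members being adjacent iff their symmetric difference has exactly one element. -/
def TARGraph (F : Finset (Finset V)) : SimpleGraph {S : Finset V // S ∈ F} where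
  Adj S T := (symmDiff S.1 T.1).card = 1
  symm := ⟨fun S T (h : (symmDiff S.1 T.1).card = 1) =>
    show (symmDiff T.1 S.1).card = 1 by rwa [symmDiff_comm] at h⟩
  loopless := ⟨fun S (h : (symmDiff S.1 S.1).card = 1) => by simp [symmDiff_self] at h⟩

instance (F : Finset (Finset V)) : DecidableRel (TARGraph F).Adj :=
  fun S T => inferInstanceAs (Decidable ((symmDiff S.1 T.1).card = 1))

lemma univ_mem {F : Finset (Finset V)} (hne : F.Nonempty) (hsup : SupersetClosed F) :
    (Finset.univ : Finset V) ∈ F :=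
  hsup hne.choose_spec (Finset.subset_univ _)


open Finset
open scoped symmDiff

/-! In a superset-closed family, S and T are joined by a walk of length |S △ T| (up to S ∪ T, then
down to T), so TAR-graph distance is |S △ T| and φ preserves it. The maximum degree of the TAR
graph is |V|, attained at V, whence |V| = |V'|. Let U' = φ(V), let M' be minimal in F' and
S = φ⁻¹(M'). Each of the |V| - |S| sets S ∪ {z} is a neighbour of S one step closer to V, so its
image is a neighbour of M' one step closer to U'; by minimality that neighbour is M' ∪ {y}, so
y ∈ U' \ M'. Hence |V| - |S| ≤ |U' \ M'| ≤ |M' △ U'| = |V| - |S|, forcing M' ⊆ U'. Then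
T ↦ T △ U'ᶜ preserves F' and is an automorphism of its TAR graph; composed with φ it is ψ. -/

lemma isMinimalMem_iff_minimal {α : Type*} {F : Finset (Finset α)} {M : Finset α} :
    IsMinimalMem F M ↔ Minimal (· ∈ F) M := by
  rw [minimal_iff_forall_lt]
  rfl

lemma exists_isMinimalMem_subset {α : Type*} {F : Finset (Finset α)} {T : Finset α} (hT : T ∈ F) :
    ∃ M ⊆ T, IsMinimalMem F M := by
  simpa only [isMinimalMem_iff_minimal] using exists_minimal_le_of_wellFoundedLT (· ∈ F) T hT

section

variable {α : Type*} [DecidableEq α]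

lemma card_symmDiff_eq_add (s t : Finset α) : #(s ∆ t) = #(s \ t) + #(t \ s) := by
  rw [symmDiff_def, sup_eq_union, card_union_of_disjoint disjoint_sdiff_sdiff]

lemma mem_of_card_insert_symmDiff_lt {y : α} {M B : Finset α} (h : #(insert y M ∆ B) < #(M ∆ B)) :
    y ∈ B := by
  by_contra hyB
  have : insert y M ∆ B = insert y (M ∆ B) := by ext; simp [mem_symmDiff]; grind
  exact h.not_ge (this ▸ card_le_card (subset_insert y _))

lemma card_symmDiff_compl [Fintype α] (s t : Finset α) :
    #(s ∆ tᶜ) = Fintype.card α - #(s ∆ t) := by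
  rw [← card_compl]
  congr 1
  ext
  simp [mem_symmDiff]
  tauto

lemma IsMinimalMem.exists_eq_insert {F : Finset (Finset α)} {M T : Finset α}
    (hM : IsMinimalMem F M) (hT : T ∈ F) (hTM : #(T ∆ M) = 1) : ∃ y ∉ M, T = insert y M := by
  obtain ⟨y, hy⟩ := card_eq_one.1 hTM
  have hT' : T = {y} ∆ M := by rw [← hy, symmDiff_symmDiff_cancel_right]
  by_cases hyM : y ∈ M
  · refine absurd hT (hM.2 _ ?_)
    rw [hT', show {y} ∆ M = M.erase y by ext; simp [mem_symmDiff]; grind]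
    exact erase_ssubset hyM
  · exact ⟨y, hyM, by rw [hT']; ext; simp [mem_symmDiff]; grind⟩

lemma SupersetClosed.symmDiff_mem {F : Finset (Finset α)} (hsup : SupersetClosed F)
    {C : Finset α} (hC : ∀ M, IsMinimalMem F M → Disjoint C M) {T : Finset α} (hT : T ∈ F) :
    T ∆ C ∈ F := by
  obtain ⟨M, hMT, hM⟩ := exists_isMinimalMem_subset hT
  exact hsup hM.1 fun x hx =>
    mem_symmDiff.2 (.inl ⟨hMT hx, fun hxC => disjoint_left.1 (hC M hM) hxC hx⟩)

end

namespace TARGraph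

variable {F : Finset (Finset V)}

lemma card_symmDiff_le_length {S T : {S : Finset V // S ∈ F}} (P : (TARGraph F).Walk S T) :
    #(S.1 ∆ T.1) ≤ P.length := by
  induction P with
  | nil => simp
  | @cons A B C hAB _ ih =>
    have hAB : #(A.1 ∆ B.1) = 1 := hAB
    calc #(A.1 ∆ C.1) ≤ #(A.1 ∆ B.1 ∪ B.1 ∆ C.1) := card_le_card (symmDiff_triangle _ _ _)
      _ ≤ #(A.1 ∆ B.1) + #(B.1 ∆ C.1) := card_union_le _ _
      _ ≤ _ := by rw [SimpleGraph.Walk.length_cons]; omega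

lemma exists_walk_of_subset (hsup : SupersetClosed F) {S T : {S : Finset V // S ∈ F}}
    (hST : S.1 ⊆ T.1) : ∃ W : (TARGraph F).Walk S T, W.length = #(T.1 \ S.1) := by
  induction hn : #(T.1 \ S.1) generalizing S with
  | zero =>
    obtain rfl : S = T := Subtype.ext (hST.antisymm (by simpa using hn))
    exact ⟨.nil, rfl⟩
  | succ n ih =>
    obtain ⟨x, hx⟩ : (T.1 \ S.1).Nonempty := card_pos.mp (by omega)
    obtain ⟨hxT, hxS⟩ := mem_sdiff.mp hx
    let S' : {S : Finset V // S ∈ F} := ⟨insert x S.1, hsup S.2 (subset_insert x S.1)⟩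
    have hadj : (TARGraph F).Adj S S' := by
      change #(S.1 ∆ insert x S.1) = 1
      rw [symmDiff_of_le (subset_insert x S.1), insert_sdiff_cancel hxS, card_singleton]
    have hS'T : #(T.1 \ S'.1) = n := by
      rw [sdiff_insert, card_erase_of_mem hx, hn, Nat.add_sub_cancel]
    obtain ⟨P, hP⟩ := ih (insert_subset hxT hST) hS'T
    exact ⟨.cons hadj P, by rw [SimpleGraph.Walk.length_cons, hP]⟩

lemma exists_walk_length_eq (hsup : SupersetClosed F) (S T : {S : Finset V // S ∈ F}) :
    ∃ W : (TARGraph F).Walk S T, W.length = #(S.1 ∆ T.1) := by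
  let U : {S : Finset V // S ∈ F} := ⟨S.1 ∪ T.1, hsup S.2 subset_union_left⟩
  obtain ⟨WS, hWS⟩ := exists_walk_of_subset hsup (S := S) (T := U) subset_union_left
  obtain ⟨WT, hWT⟩ := exists_walk_of_subset hsup (S := T) (T := U) subset_union_right
  refine ⟨WS.append WT.reverse, ?_⟩
  rw [SimpleGraph.Walk.length_append, SimpleGraph.Walk.length_reverse, hWS, hWT,
    union_sdiff_left, union_sdiff_right, card_symmDiff_eq_add, add_comm]

variable {V' : Type*} [Fintype V'] [DecidableEq V'] {F' : Finset (Finset V')}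

lemma card_symmDiff_map_le (hsup : SupersetClosed F) (φ : TARGraph F →g TARGraph F')
    (S T : {S : Finset V // S ∈ F}) : #((φ S).1 ∆ (φ T).1) ≤ #(S.1 ∆ T.1) := by
  obtain ⟨P, hP⟩ := exists_walk_length_eq hsup S T
  simpa [hP] using card_symmDiff_le_length (P.map φ)

lemma card_symmDiff_iso (hsup : SupersetClosed F) (hsup' : SupersetClosed F')
    (φ : TARGraph F ≃g TARGraph F') (S T : {S : Finset V // S ∈ F}) :
    #((φ S).1 ∆ (φ T).1) = #(S.1 ∆ T.1) := by
  refine (card_symmDiff_map_le hsup φ.toHom S T).antisymm ?_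
  simpa using card_symmDiff_map_le hsup' φ.symm.toHom (φ S) (φ T)

lemma degree_le_card (S : {S : Finset V // S ∈ F}) : (TARGraph F).degree S ≤ Fintype.card V := by
  rw [← SimpleGraph.card_neighborFinset_eq_degree]
  calc #((TARGraph F).neighborFinset S) ≤ #(powersetCard 1 (univ : Finset V)) := by
        refine card_le_card_of_injOn (fun T => S.1 ∆ T.1) (fun T hT => ?_) (fun T _ T' _ h => ?_)
        · exact mem_powersetCard.2 ⟨subset_univ _, (SimpleGraph.mem_neighborFinset _ _ _).1 hT⟩
        · exact Subtype.ext (symmDiff_right_injective S.1 h)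
    _ = Fintype.card V := by simp

lemma card_le_degree_univ (hU : (univ : Finset V) ∈ F)
    (hn1 : ∀ S : Finset V, #S = Fintype.card V - 1 → S ∈ F) :
    Fintype.card V ≤ (TARGraph F).degree ⟨univ, hU⟩ := by
  rw [← SimpleGraph.card_neighborSet_eq_degree]
  refine Fintype.card_le_of_injective
    (fun x => ⟨⟨univ.erase x, hn1 _ (by simp [card_erase_of_mem])⟩, ?_⟩) fun x y h => ?_
  · change #(univ ∆ univ.erase x) = 1
    rw [symmDiff_of_ge (erase_subset x univ), sdiff_erase_self (mem_univ x), card_singleton]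
  · exact (erase_inj _ (mem_univ x)).1 (congrArg (fun T => T.1.1) h)

lemma maxDegree_eq_card (hU : (univ : Finset V) ∈ F)
    (hn1 : ∀ S : Finset V, #S = Fintype.card V - 1 → S ∈ F) :
    (TARGraph F).maxDegree = Fintype.card V :=
  (SimpleGraph.maxDegree_le_of_forall_degree_le _ _ degree_le_card).antisymm
    ((card_le_degree_univ hU hn1).trans (SimpleGraph.degree_le_maxDegree _ _))

def symmDiffIso (C : Finset V) (hC : ∀ T ∈ F, T ∆ C ∈ F) : TARGraph F ≃g TARGraph F where
  toFun T := ⟨T.1 ∆ C, hC T.1 T.2⟩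
  invFun T := ⟨T.1 ∆ C, hC T.1 T.2⟩
  left_inv T := Subtype.ext (symmDiff_symmDiff_cancel_right C T.1)
  right_inv T := Subtype.ext (symmDiff_symmDiff_cancel_right C T.1)
  map_rel_iff' {S T} := by
    change #(S.1 ∆ C ∆ (T.1 ∆ C)) = 1 ↔ #(S.1 ∆ T.1) = 1
    rw [symmDiff_symmDiff_symmDiff_comm, symmDiff_self, symmDiff_bot]

lemma card_symmDiff_apply_univ (hsup : SupersetClosed F) (hsup' : SupersetClosed F')
    (hU : (univ : Finset V) ∈ F) (φ : TARGraph F ≃g TARGraph F') (T : {S : Finset V // S ∈ F}) :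
    #((φ T).1 ∆ (φ ⟨univ, hU⟩).1) = #T.1ᶜ := by
  rw [card_symmDiff_iso hsup hsup']
  change #(T.1 ∆ univ) = _
  rw [← top_eq_univ, symmDiff_top, hnot_eq_compl]

lemma exists_mem_sdiff_apply_insert_eq (hsup : SupersetClosed F) (hsup' : SupersetClosed F')
    (hU : (univ : Finset V) ∈ F) (φ : TARGraph F ≃g TARGraph F') {M : Finset V'}
    (hM : IsMinimalMem F' M) {S : {S : Finset V // S ∈ F}} (hS : φ S = ⟨M, hM.1⟩) {z : V}
    (hz : z ∉ S.1) : ∃ y ∈ (φ ⟨univ, hU⟩).1 \ M,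
      (φ ⟨insert z S.1, hsup S.2 (subset_insert z S.1)⟩).1 = insert y M := by
  have hadj : (TARGraph F).Adj ⟨insert z S.1, hsup S.2 (subset_insert z S.1)⟩ S :=
    show #(insert z S.1 ∆ S.1) = 1 by
      rw [symmDiff_of_ge (subset_insert z S.1), insert_sdiff_cancel hz, card_singleton]
  have hadj' := φ.map_adj_iff.2 hadj
  rw [hS] at hadj'
  obtain ⟨y, hyM, hy⟩ := hM.exists_eq_insert (φ _).2 hadj'
  refine ⟨y, mem_sdiff.2 ⟨mem_of_card_insert_symmDiff_lt (M := M) ?_, hyM⟩, hy⟩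
  have hMU := card_symmDiff_apply_univ hsup hsup' hU φ S
  rw [hS] at hMU
  rw [← hy, card_symmDiff_apply_univ hsup hsup' hU φ, hMU]
  exact card_lt_card (compl_ssubset_compl.2 (ssubset_insert hz))

lemma isMinimalMem_subset_apply_univ (hsup : SupersetClosed F) (hsup' : SupersetClosed F')
    (hU : (univ : Finset V) ∈ F) (φ : TARGraph F ≃g TARGraph F') {M : Finset V'}
    (hM : IsMinimalMem F' M) : M ⊆ (φ ⟨univ, hU⟩).1 := by
  set U' := (φ ⟨univ, hU⟩).1
  set S := φ.symm ⟨M, hM.1⟩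
  have hS : φ S = ⟨M, hM.1⟩ := φ.apply_symm_apply _
  have hMU : #(M ∆ U') = #S.1ᶜ := by rw [← card_symmDiff_apply_univ hsup hsup' hU φ S, hS]
  have hcount : #S.1ᶜ ≤ #(U' \ M) :=
    calc #S.1ᶜ ≤ #((U' \ M).image (insert · M)) := by
          refine card_le_card_of_injOn
            (fun z => (φ ⟨insert z S.1, hsup S.2 (subset_insert z S.1)⟩).1)
            (fun z hz => ?_) (fun z hz z' _ h => ?_)
          · obtain ⟨y, hy, hzy⟩ :=
              exists_mem_sdiff_apply_insert_eq hsup hsup' hU φ hM hS (mem_compl.1 hz)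
            exact mem_image.2 ⟨y, hy, hzy.symm⟩
          · exact (insert_inj (mem_compl.1 hz)).1
              (congrArg Subtype.val (φ.injective (Subtype.ext h)))
      _ ≤ #(U' \ M) := card_image_le
  have : #(M \ U') = 0 := by
    have := card_symmDiff_eq_add M U'
    omega
  simpa using this

end TARGraph

theorem stmt7 {V' : Type*} [Fintype V'] [DecidableEq V']
    (F : Finset (Finset V)) (hne : F.Nonempty) (hsup : SupersetClosed F)
    (hn1 : ∀ S : Finset V, S.card = Fintype.card V - 1 → S ∈ F)
    (F' : Finset (Finset V')) (hne' : F'.Nonempty) (hsup' : SupersetClosed F')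
    (hn1' : ∀ S : Finset V', S.card = Fintype.card V' - 1 → S ∈ F')
    (φ : TARGraph F ≃g TARGraph F') :
    Fintype.card V = Fintype.card V' ∧
    (∀ M' : Finset V', IsMinimalMem F' M' →
      Disjoint ((φ ⟨Finset.univ, univ_mem hne hsup⟩).1)ᶜ M') ∧
    ∃ ψ : TARGraph F ≃g TARGraph F',
      ∀ S : {S : Finset V // S ∈ F},
        (ψ S).1 = symmDiff (φ S).1 ((φ ⟨Finset.univ, univ_mem hne hsup⟩).1)ᶜ ∧
        (ψ S).1.card = S.1.card := by
  have hU := univ_mem hne hsup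
  have hcard : Fintype.card V = Fintype.card V' := by
    rw [← TARGraph.maxDegree_eq_card hU hn1,
      ← TARGraph.maxDegree_eq_card (univ_mem hne' hsup') hn1', φ.maxDegree_eq]
  have hdisj (M' : Finset V') (hM' : IsMinimalMem F' M') : Disjoint (φ ⟨univ, hU⟩).1ᶜ M' :=
    disjoint_compl_left_iff.2 (TARGraph.isMinimalMem_subset_apply_univ hsup hsup' hU φ hM')
  refine ⟨hcard, hdisj, φ.trans (TARGraph.symmDiffIso _ fun T => hsup'.symmDiff_mem hdisj),
    fun S => ⟨rfl, ?_⟩⟩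
  change #((φ S).1 ∆ (φ ⟨univ, hU⟩).1ᶜ) = #S.1
  rw [card_symmDiff_compl, TARGraph.card_symmDiff_apply_univ hsup hsup' hU φ, card_compl, ← hcard]
  have := card_le_univ S.1
  omega
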